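/- Let G be a graph, X ⊆ V(G), and let I' be an independent set of G containing a subset X_I ⊆ X ∩ I' with conf_{G-X}(X_I) ≥ |X|. Then |I'| ≤ α(G - X); in particular, every maximum independent set of G - X is at least as large as I'. -/
import Mathlib


attribute [local instance] Classical.propDecidable

namespace VCKernel

variable {V : Type*} [Fintype V] [DecidableEq V]

/-- `S` is an independent set of `G`. -/
def IsIndep (G : SimpleGraph V) (S : Finset V) : Prop :=
  ∀ u ∈ S, ∀ v ∈ S, ¬ G.Adj u v

/-- Independence number of the subgraph of `G` induced on the vertex set `A`. -/
noncomputable def alphaOn (G : SimpleGraph V) (A : Set V) : ℕ :=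
  sSup {n | ∃ S : Finset V, ↑S ⊆ A ∧ IsIndep G S ∧ S.card = n}

/-- Independence number `α(G)`. -/
noncomputable def alpha (G : SimpleGraph V) : ℕ := alphaOn G Set.univ

/-- `Y` is a blocking set: deleting it decreases the independence number. -/
def IsBlocking (G : SimpleGraph V) (Y : Finset V) : Prop :=
  alphaOn G (Set.univ \ ↑Y) < alpha G

/-- `Y` is a minimal blocking set. -/
def IsMinBlocking (G : SimpleGraph V) (Y : Finset V) : Prop :=
  IsBlocking G Y ∧ ∀ Y' ⊂ Y, ¬ IsBlocking G Y'

/-- Open neighborhood of the vertex set `X'` in `G`. -/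
def nbhd (G : SimpleGraph V) (X' : Finset V) : Set V :=
  {v | ∃ u ∈ X', G.Adj u v}

/-- Number of conflicts induced by `X'` on the induced subgraph with vertex set `A`. -/
noncomputable def conf (G : SimpleGraph V) (A : Set V) (X' : Finset V) : ℕ :=
  alphaOn G A - alphaOn G (A \ nbhd G X')

/-- `C` is (the vertex set of) a connected component of the subgraph of `G`
induced on `A`. -/
def IsCompOf (G : SimpleGraph V) (A C : Set V) : Prop :=
  C ⊆ A ∧ (G.induce C).Connected ∧ ∀ u ∈ C, ∀ v ∈ A, G.Adj u v → v ∈ C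

/-- Feasible solution to the Independent Set LP of the subgraph induced on `A`. -/
def FeasISOn (G : SimpleGraph V) (A : Set V) (x : V → ℝ) : Prop :=
  (∀ v ∈ A, 0 ≤ x v ∧ x v ≤ 1) ∧
    ∀ u ∈ A, ∀ v ∈ A, G.Adj u v → x u + x v ≤ 1

/-- Half-integrality on `A`. -/
def HalfIntOn (A : Set V) (x : V → ℝ) : Prop :=
  ∀ v ∈ A, x v = 0 ∨ x v = 1/2 ∨ x v = 1

/-- Objective value of an LP solution on vertex set `A`. -/
noncomputable def weightOn (A : Set V) (x : V → ℝ) : ℝ :=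
  ∑ v, if v ∈ A then x v else 0

/-- `x` is an optimum half-integral solution to the Independent Set LP
of the subgraph induced on `A`. -/
def OptHIOn (G : SimpleGraph V) (A : Set V) (x : V → ℝ) : Prop :=
  FeasISOn G A x ∧ HalfIntOn A x ∧
    ∀ y : V → ℝ, FeasISOn G A y → HalfIntOn A y → weightOn A y ≤ weightOn A x

/-- Feasible solution to the Vertex Cover LP of `G`. -/
def FeasVC (G : SimpleGraph V) (x : V → ℝ) : Prop :=
  (∀ v, 0 ≤ x v ∧ x v ≤ 1) ∧ ∀ u v, G.Adj u v → 1 ≤ x u + x v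

/-- Optimum value of the Independent Set LP of `G`. -/
noncomputable def lpIS (G : SimpleGraph V) : ℝ :=
  sSup {w | ∃ x : V → ℝ, FeasISOn G Set.univ x ∧ w = ∑ v, x v}

/-- Optimum value of the Vertex Cover LP of `G`. -/
noncomputable def lpVC (G : SimpleGraph V) : ℝ :=
  sInf {w | ∃ x : V → ℝ, FeasVC G x ∧ w = ∑ v, x v}

/-- `C` is a vertex cover of `G`. -/
def IsVC (G : SimpleGraph V) (C : Finset V) : Prop :=
  ∀ u v, G.Adj u v → u ∈ C ∨ v ∈ C

/-- Vertex cover number of `G`. -/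
noncomputable def vcNum (G : SimpleGraph V) : ℕ :=
  sInf {n | ∃ C : Finset V, IsVC G C ∧ C.card = n}

/-- `Z` is a feedback vertex set of `G`. -/
def IsFVS (G : SimpleGraph V) (Z : Finset V) : Prop :=
  (G.induce ((↑Z : Set V)ᶜ)).IsAcyclic

/-- `Z` is an odd cycle transversal of `G`. -/
def IsOCT (G : SimpleGraph V) (Z : Finset V) : Prop :=
  (G.induce ((↑Z : Set V)ᶜ)).Colorable 2

/-- `G` is a `d`-quasi-forest: each connected component has a feedback
vertex set of size at most `d`. -/
def QuasiForest (G : SimpleGraph V) (d : ℕ) : Prop :=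
  ∀ C : Set V, IsCompOf G Set.univ C →
    ∃ Z : Finset V, Z.card ≤ d ∧ (G.induce (C \ ↑Z)).IsAcyclic

/-- `G` is `d`-quasi-bipartite: each connected component has an odd cycle
transversal of size at most `d`. -/
def QuasiBipartite (G : SimpleGraph V) (d : ℕ) : Prop :=
  ∀ C : Set V, IsCompOf G Set.univ C →
    ∃ Z : Finset V, Z.card ≤ d ∧ (G.induce (C \ ↑Z)).Colorable 2

/-- Feedback vertex set number of `G`. -/
noncomputable def fvsNum (G : SimpleGraph V) : ℕ :=
  sInf {n | ∃ Z : Finset V, IsFVS G Z ∧ Z.card = n}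

/-- Odd cycle transversal number of `G`. -/
noncomputable def octNum (G : SimpleGraph V) : ℕ :=
  sInf {n | ∃ Z : Finset V, IsOCT G Z ∧ Z.card = n}

/-- The subgraph of `G` induced on `A` has treedepth at most `k`
(elimination-forest characterization of treedepth). -/
def tdLE (G : SimpleGraph V) : ℕ → Set V → Prop
  | 0, A => A = ∅
  | (k+1), A => ∀ C : Set V, IsCompOf G A C → ∃ v ∈ C, tdLE G k (C \ {v})

lemma alphaOn_bddAbove (G : SimpleGraph V) (A : Set V) :
    BddAbove {n | ∃ S : Finset V, ↑S ⊆ A ∧ IsIndep G S ∧ S.card = n} := by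
  refine ⟨Fintype.card V, fun n hn => ?_⟩
  obtain ⟨S, _, _, rfl⟩ := hn
  exact S.card_le_univ.trans_eq (Finset.card_univ)

lemma alphaOn_nonempty (G : SimpleGraph V) (A : Set V) :
    {n | ∃ S : Finset V, ↑S ⊆ A ∧ IsIndep G S ∧ S.card = n}.Nonempty :=
  ⟨0, ∅, by simp, fun u hu => by simp at hu, rfl⟩

lemma le_alphaOn (G : SimpleGraph V) (A : Set V) (S : Finset V)
    (hS : ↑S ⊆ A) (hind : IsIndep G S) : S.card ≤ alphaOn G A :=
  le_csSup (alphaOn_bddAbove G A) ⟨S, hS, hind, rfl⟩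

lemma alphaOn_mono (G : SimpleGraph V) {A B : Set V} (h : A ⊆ B) :
    alphaOn G A ≤ alphaOn G B := by
  refine csSup_le_csSup (alphaOn_bddAbove G B) (alphaOn_nonempty G A) ?_
  rintro n ⟨S, hS, hind, rfl⟩
  exact ⟨S, hS.trans h, hind, rfl⟩

/-- If an independent set `I'` of `G` contains `X_I ⊆ X ∩ I'` with
`conf_{G-X}(X_I) ≥ |X|`, then `|I'| ≤ α(G - X)`. -/
theorem stmt17 (G : SimpleGraph V) (X I' : Finset V) (hI' : IsIndep G I')
    (XI : Finset V) (hXI : XI ⊆ X ∩ I')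
    (hconf : X.card ≤ conf G (Set.univ \ ↑X) XI) :
    I'.card ≤ alphaOn G (Set.univ \ ↑X) := by
  set A := (Set.univ \ ↑X : Set V)
  set B := A \ nbhd G XI
  have hBA : B ⊆ A := Set.diff_subset
  have hba : alphaOn G B ≤ alphaOn G A := alphaOn_mono G hBA
  have hsum : alphaOn G B + X.card ≤ alphaOn G A := by
    have := (Nat.le_sub_iff_add_le hba).mp hconf
    omega
  -- I' \ X is independent and contained in B
  have hindS : IsIndep G (I' \ X) := fun u hu v hv =>
    hI' u (Finset.mem_sdiff.mp hu).1 v (Finset.mem_sdiff.mp hv).1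
  have hsub : ↑(I' \ X) ⊆ B := by
    intro v hv
    simp only [Finset.coe_sdiff, Set.mem_diff, Finset.mem_coe] at hv
    refine ⟨⟨Set.mem_univ v, hv.2⟩, ?_⟩
    rintro ⟨u, huXI, hadj⟩
    have huI' : u ∈ I' := (Finset.mem_inter.mp (hXI huXI)).2
    exact hI' u huI' v hv.1 hadj
  have h1 : (I' \ X).card ≤ alphaOn G B := le_alphaOn G B _ hsub hindS
  have h2 : I'.card ≤ (I' \ X).card + X.card := by
    have := Finset.card_sdiff_add_card_inter I' X
    have := Finset.card_le_card (Finset.inter_subset_right (s₁ := I') (s₂ := X))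
    omega
  omega

end VCKernel
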